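/- arXiv:1804.06890 — 4 statements merged into one kernel-verified Lean document; each statement's English description precedes it below -/
import Mathlib

section
/- For every m ∈ ℝ, σ > 0, x ∈ ℝ and every u > 0, the function u ↦ Φ((x+mu)/(σ√u)) − exp(−2mx/σ²)·Φ((−x+mu)/(σ√u)) is differentiable on (0,∞) and its derivative at u equals −(x/(σ·u^{3/2}))·φ((x+mu)/(σ√u)). Equivalently, ∂/∂u (1 − π(u,x)) = −(x/(σ·u^{3/2}))·φ((x+mu)/(σ√u)). -/
open MeasureTheory Real Set

/-- The standard normal density. -/
noncomputable def phi (x : ℝ) : ℝ := (Real.sqrt (2 * Real.pi))⁻¹ * Real.exp (-x ^ 2 / 2)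

/-- The standard normal cumulative distribution function. -/
noncomputable def Phi (x : ℝ) : ℝ := ∫ u in Set.Iio x, phi u

theorem hasDerivAt_integral_Iio {E : Type*} [NormedAddCommGroup E] [NormedSpace ℝ E]
    [CompleteSpace E] {f : ℝ → E} (hf : Integrable f) {x : ℝ} (hfx : ContinuousAt f x) :
    HasDerivAt (fun z => ∫ t in Iio z, f t) (f x) x := by
  have hsplit :
      (fun z => ∫ t in Iio z, f t) = fun z => (∫ t in Iic x, f t) + ∫ t in x..z, f t := by
    funext z
    rw [setIntegral_congr_set Iio_ae_eq_Iic,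
      ← intervalIntegral.integral_Iic_sub_Iic hf.integrableOn hf.integrableOn]
    abel
  rw [hsplit]
  exact (intervalIntegral.integral_hasDerivAt_right hf.intervalIntegrable
    hf.aestronglyMeasurable.stronglyMeasurableAtFilter hfx).const_add _

theorem phi_eq_gaussianPDFReal : phi = ProbabilityTheory.gaussianPDFReal 0 1 := by
  funext x
  simp [phi, ProbabilityTheory.gaussianPDFReal]

theorem continuous_phi : Continuous phi := by
  unfold phi
  fun_prop

theorem hasDerivAt_Phi (y : ℝ) : HasDerivAt Phi (phi y) y := by
  have hint : Integrable phi :=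
    phi_eq_gaussianPDFReal ▸ ProbabilityTheory.integrable_gaussianPDFReal 0 1
  exact hasDerivAt_integral_Iio hint continuous_phi.continuousAt

theorem phi_eq_exp_mul_phi (a b : ℝ) : phi a = exp ((b ^ 2 - a ^ 2) / 2) * phi b := by
  unfold phi
  rw [mul_left_comm, ← exp_add]
  ring_nf

theorem hasDerivAt_add_mul_div_mul_sqrt (c m σ : ℝ) (hσ : σ ≠ 0) {u : ℝ} (hu : 0 < u) :
    HasDerivAt (fun s => (c + m * s) / (σ * √s)) ((m * u - c) / (2 * σ * u * √u)) u := by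
  have hsqrt : 0 < √u := sqrt_pos.mpr hu
  have hnum : HasDerivAt (fun s => c + m * s) m u := by
    simpa using ((hasDerivAt_id u).const_mul m).const_add c
  refine (hnum.div ((hasDerivAt_sqrt hu.ne').const_mul σ)
    (mul_ne_zero hσ hsqrt.ne')).congr_deriv ?_
  field_simp
  linear_combination (u * m + c) * sq_sqrt hu.le

theorem rpow_three_halves {u : ℝ} (hu : 0 < u) : u ^ ((3 : ℝ) / 2) = u * √u := by
  rw [show (3 : ℝ) / 2 = 1 + 1 / 2 by norm_num, rpow_add hu, rpow_one, ← sqrt_eq_rpow]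

/-- For every `m ∈ ℝ`, `σ > 0`, `x ∈ ℝ` and every `u > 0`, the function
`u ↦ Φ((x+mu)/(σ√u)) − exp(−2mx/σ²)·Φ((−x+mu)/(σ√u))` (i.e. `u ↦ 1 − π(u,x)`) is
differentiable at `u` with derivative `−(x/(σ·u^{3/2}))·φ((x+mu)/(σ√u))`. -/
theorem stmt_0 (m σ x : ℝ) (hσ : 0 < σ) :
    ∀ u : ℝ, 0 < u →
      HasDerivAt (fun s : ℝ =>
          Phi ((x + m * s) / (σ * Real.sqrt s)) -
            Real.exp (-2 * m * x / σ ^ 2) * Phi ((-x + m * s) / (σ * Real.sqrt s)))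
        (-(x / (σ * u ^ ((3 : ℝ) / 2))) * phi ((x + m * u) / (σ * Real.sqrt u))) u := by
  intro u hu
  set a := (x + m * u) / (σ * √u)
  set b := (-x + m * u) / (σ * √u)
  have hA := (hasDerivAt_Phi a).comp u (hasDerivAt_add_mul_div_mul_sqrt x m σ hσ.ne' hu)
  have hB := (hasDerivAt_Phi b).comp u (hasDerivAt_add_mul_div_mul_sqrt (-x) m σ hσ.ne' hu)
  -- The reflection factor `exp (-2mx/σ²)` is exactly `φ(a)/φ(b)`.
  have hreflect : exp (-2 * m * x / σ ^ 2) * phi b = phi a := by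
    rw [phi_eq_exp_mul_phi a b]
    congr 2
    simp only [a, b, div_pow, mul_pow, sq_sqrt hu.le]
    field_simp
    ring
  refine (hA.sub (hB.const_mul (exp (-2 * m * x / σ ^ 2)))).congr_deriv ?_
  rw [← mul_assoc, hreflect, rpow_three_halves hu]
  field_simp
  ring
end

section
/- For all real numbers A > 0, B ≥ 0 and a > 0, ∫_a^∞ exp(−A·v² − B/v²) dv = (1/(2√A))·[ exp(−2√(A·B))·∫_{√A·a − √B/a}^∞ exp(−u²) du + exp(2√(A·B))·∫_{√A·a + √B/a}^∞ exp(−u²) du ]. -/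
/-!
Completing the square gives `-(s v)² - (t / v)² = ∓ 2 s t - (s v ∓ t / v)²`, and the derivatives
`s ± t / v²` of `s v ∓ t / v` average to `s`. Hence, with `G c = ∫_c^∞ exp (-u²) du`,
`-(1 / 2s) (e^{-2st} G (s v - t / v) + e^{2st} G (s v + t / v))` is a primitive of
`exp (-(s v)² - (t / v)²)` on `v > 0` that vanishes at `+∞`; take `s = √A`, `t = √B`.
-/

open MeasureTheory Real Set Filter Topology

theorem hasDerivAt_integral_Ioi {f : ℝ → ℝ} {b c : ℝ} (hf : IntegrableOn f (Ioi b)) (hbc : b < c)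
    (hc : ContinuousAt f c) : HasDerivAt (fun x => ∫ t in Ioi x, f t) (-f c) c := by
  have hint : IntervalIntegrable f volume b c :=
    (intervalIntegrable_iff_integrableOn_Ioc_of_le hbc.le).2 (hf.mono_set Ioc_subset_Ioi_self)
  have hmeas : StronglyMeasurableAtFilter f (𝓝 c) :=
    AEStronglyMeasurable.stronglyMeasurableAtFilter_of_mem hf.1 (Ioi_mem_nhds hbc)
  refine ((intervalIntegral.integral_hasDerivAt_right hint hmeas hc).const_sub
    (∫ t in Ioi b, f t)).congr_of_eventuallyEq ?_
  filter_upwards [Ioi_mem_nhds hbc] with x hx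
  rw [← intervalIntegral.integral_interval_add_Ioi hf (hf.mono_set (Ioi_subset_Ioi hx.le))]
  ring

/-- `gaussianTail c = (√π / 2) * erfc c`. -/
noncomputable def gaussianTail (c : ℝ) : ℝ := ∫ u in Ioi c, exp (-u ^ 2)

theorem integrable_exp_neg_sq : Integrable fun u : ℝ => exp (-u ^ 2) := by
  simpa using integrable_exp_neg_mul_sq one_pos

theorem hasDerivAt_gaussianTail (c : ℝ) : HasDerivAt gaussianTail (-exp (-c ^ 2)) c :=
  hasDerivAt_integral_Ioi integrable_exp_neg_sq.integrableOn (sub_one_lt c) (by fun_prop)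

theorem tendsto_gaussianTail_atTop : Tendsto gaussianTail atTop (𝓝 0) :=
  tendsto_integral_Ioi_zero tendsto_id

section Primitive

variable {s t v : ℝ}

theorem exp_neg_mul_exp_neg_sq_sub_div (hv : v ≠ 0) :
    exp (-2 * (s * t)) * exp (-(s * v - t / v) ^ 2) = exp (-(s * v) ^ 2 - (t / v) ^ 2) := by
  rw [← exp_add]
  congr 1
  field_simp
  ring

theorem exp_mul_exp_neg_sq_add_div (hv : v ≠ 0) :
    exp (2 * (s * t)) * exp (-(s * v + t / v) ^ 2) = exp (-(s * v) ^ 2 - (t / v) ^ 2) := by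
  rw [← exp_add]
  congr 1
  field_simp
  ring

noncomputable def gaussianTailPrimitive (s t v : ℝ) : ℝ :=
  -(1 / (2 * s)) * (exp (-2 * (s * t)) * gaussianTail (s * v - t / v) +
    exp (2 * (s * t)) * gaussianTail (s * v + t / v))

theorem hasDerivAt_gaussianTailPrimitive (hs : s ≠ 0) (hv : v ≠ 0) :
    HasDerivAt (gaussianTailPrimitive s t) (exp (-(s * v) ^ 2 - (t / v) ^ 2)) v := by
  have hdiv : HasDerivAt (fun v => t / v) (-(t / v ^ 2)) v := by
    simpa [div_eq_mul_inv] using (hasDerivAt_inv hv).const_mul t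
  have hlin : HasDerivAt (fun v => s * v) s v := by
    simpa using (hasDerivAt_id v).const_mul s
  have hminus : HasDerivAt (fun v => gaussianTail (s * v - t / v))
      (-exp (-(s * v - t / v) ^ 2) * (s - -(t / v ^ 2))) v :=
    (hasDerivAt_gaussianTail _).comp v (hlin.sub hdiv)
  have hplus : HasDerivAt (fun v => gaussianTail (s * v + t / v))
      (-exp (-(s * v + t / v) ^ 2) * (s + -(t / v ^ 2))) v :=
    (hasDerivAt_gaussianTail _).comp v (hlin.add hdiv)
  refine (((hminus.const_mul _).add (hplus.const_mul _)).const_mul _).congr_deriv ?_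
  linear_combination (s + t / v ^ 2) / (2 * s) * exp_neg_mul_exp_neg_sq_sub_div hv +
    (s - t / v ^ 2) / (2 * s) * exp_mul_exp_neg_sq_add_div hv +
    exp (-(s * v) ^ 2 - (t / v) ^ 2) * mul_inv_cancel₀ hs

theorem tendsto_gaussianTailPrimitive_atTop (hs : 0 < s) :
    Tendsto (gaussianTailPrimitive s t) atTop (𝓝 0) := by
  have hdiv : Tendsto (fun v => t / v) atTop (𝓝 0) := tendsto_const_nhds.div_atTop tendsto_id
  have hlin : Tendsto (fun v => s * v) atTop atTop := tendsto_id.const_mul_atTop hs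
  have hminus : Tendsto (fun v => gaussianTail (s * v - t / v)) atTop (𝓝 0) :=
    tendsto_gaussianTail_atTop.comp (by simpa only [sub_eq_add_neg] using hlin.atTop_add hdiv.neg)
  have hplus : Tendsto (fun v => gaussianTail (s * v + t / v)) atTop (𝓝 0) :=
    tendsto_gaussianTail_atTop.comp (hlin.atTop_add hdiv)
  have := ((hminus.const_mul (exp (-2 * (s * t)))).add
    (hplus.const_mul (exp (2 * (s * t))))).const_mul (-(1 / (2 * s)))
  simp only [mul_zero, add_zero] at this
  exact this

end Primitive

theorem integrable_exp_neg_sq_sub_div_sq {s : ℝ} (hs : s ≠ 0) (t : ℝ) :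
    Integrable fun v : ℝ => exp (-(s * v) ^ 2 - (t / v) ^ 2) := by
  refine (integrable_exp_neg_mul_sq (pow_pos (abs_pos.2 hs) 2)).mono' (by fun_prop) ?_
  refine ae_of_all _ fun v => ?_
  rw [norm_eq_abs, abs_exp, exp_le_exp, sq_abs, mul_pow]
  nlinarith [sq_nonneg (t / v)]

theorem integral_Ioi_exp_neg_sq_sub_div_sq {s t a : ℝ} (hs : 0 < s) (ha : 0 < a) :
    ∫ v in Ioi a, exp (-(s * v) ^ 2 - (t / v) ^ 2) =
      1 / (2 * s) * (exp (-2 * (s * t)) * gaussianTail (s * a - t / a) +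
        exp (2 * (s * t)) * gaussianTail (s * a + t / a)) := by
  rw [integral_Ioi_of_hasDerivAt_of_tendsto'
    (fun v hv => hasDerivAt_gaussianTailPrimitive hs.ne' (ha.trans_le hv).ne')
    (integrable_exp_neg_sq_sub_div_sq hs.ne' t).integrableOn (tendsto_gaussianTailPrimitive_atTop hs),
    gaussianTailPrimitive]
  ring

/-- For all real numbers `A > 0`, `B ≥ 0` and `a > 0`,
`∫_a^∞ exp(−A·v² − B/v²) dv = (1/(2√A))·[exp(−2√(A·B))·∫_{√A·a − √B/a}^∞ exp(−u²) du
+ exp(2√(A·B))·∫_{√A·a + √B/a}^∞ exp(−u²) du]`. -/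
theorem stmt_2 (A B a : ℝ) (hA : 0 < A) (hB : 0 ≤ B) (ha : 0 < a) :
    (∫ v in Set.Ioi a, Real.exp (-A * v ^ 2 - B / v ^ 2)) =
      (1 / (2 * Real.sqrt A)) *
        (Real.exp (-2 * Real.sqrt (A * B)) *
            (∫ u in Set.Ioi (Real.sqrt A * a - Real.sqrt B / a), Real.exp (-u ^ 2)) +
          Real.exp (2 * Real.sqrt (A * B)) *
            (∫ u in Set.Ioi (Real.sqrt A * a + Real.sqrt B / a), Real.exp (-u ^ 2))) := by
  have h := integral_Ioi_exp_neg_sq_sub_div_sq (t := √B) (sqrt_pos.2 hA) ha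
  simp only [mul_pow, div_pow, sq_sqrt hA.le, sq_sqrt hB, gaussianTail] at h
  rw [sqrt_mul hA.le, ← h]
  simp only [neg_mul]
end

section
/- Let m ∈ ℝ, σ > 0, t > 0 and z₀ > z_c be real numbers, and define f̃(t,x,z₀) := (1/(σ√t))·exp(−m(z₀−x)/σ² − m²t/(2σ²))·(φ((z₀−x)/(σ√t)) − φ((−z₀−x+2z_c)/(σ√t))) / [Φ((z₀−z_c+mt)/(σ√t)) − exp(−2m(z₀−z_c)/σ²)·Φ((z_c−z₀+mt)/(σ√t))]. Then the denominator Φ((z₀−z_c+mt)/(σ√t)) − exp(−2m(z₀−z_c)/σ²)·Φ((z_c−z₀+mt)/(σ√t)) is strictly positive, f̃(t,x,z₀) > 0 for every x > z_c, and ∫_{z_c}^∞ f̃(t,x,z₀) dx = 1; that is, f̃(t,·,z₀) is a probability density on (z_c, ∞). -/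
open MeasureTheory Real Set

lemma phi_pos (x : ℝ) : 0 < phi x :=
  mul_pos (inv_pos.mpr (Real.sqrt_pos.mpr (by positivity))) (Real.exp_pos _)

lemma integrable_phi : Integrable phi := by
  have h : Integrable (fun x : ℝ => Real.exp (-(1/2 : ℝ) * x ^ 2)) :=
    integrable_exp_neg_mul_sq (by norm_num)
  have he : phi = fun x : ℝ => (Real.sqrt (2 * Real.pi))⁻¹ * Real.exp (-(1/2 : ℝ) * x ^ 2) := by
    funext x; unfold phi; ring_nf
  rw [he]; exact h.const_mul _

lemma phi_lt {a b : ℝ} (h : a ^ 2 < b ^ 2) : phi b < phi a := by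
  unfold phi
  refine mul_lt_mul_of_pos_left (Real.exp_lt_exp.mpr (by linarith)) ?_
  exact inv_pos.mpr (Real.sqrt_pos.mpr (by positivity))

lemma shift_Ioi (f : ℝ → ℝ) (a d : ℝ) :
    (∫ x in Ioi a, f (x + d)) = ∫ x in Ioi (a + d), f x := by
  have A : MeasurableEmbedding fun x : ℝ => x + d :=
    (Homeomorph.addRight d).isClosedEmbedding.measurableEmbedding
  have h := MeasurableEmbedding.setIntegral_map (μ := volume) A f (Ioi (a + d))
  rw [map_add_right_eq_self (volume : Measure ℝ) d] at h
  have hp : (fun x : ℝ => x + d) ⁻¹' Ioi (a + d) = Ioi a := by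
    ext x; simp [mem_Ioi]
  rw [hp] at h
  rw [h]

lemma integrable_gauss (s μ : ℝ) (hs : s ≠ 0) :
    Integrable (fun x => (1/s) * phi ((x - μ)/s)) :=
  ((integrable_phi.comp_div hs).comp_sub_right μ).const_mul _

lemma integral_gauss_Ioi (s μ c : ℝ) (hs : 0 < s) :
    (∫ x in Ioi c, (1 / s) * phi ((x - μ) / s)) = Phi ((μ - c) / s) := by
  have h1 : (∫ x in Ioi c, (1 / s) * phi ((x - μ) / s))
      = ∫ y in Ioi (c - μ), (1 / s) * phi (y / s) := by
    have := shift_Ioi (fun y => (1 / s) * phi (y / s)) c (-μ)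
    simpa [sub_eq_add_neg] using this
  have h2 : (∫ y in Ioi (c - μ), (1 / s) * phi (y / s))
      = ∫ u in Ioi ((c - μ) / s), phi u := by
    rw [integral_const_mul]
    have := integral_comp_mul_left_Ioi (fun u => phi u) (c - μ) (inv_pos.mpr hs)
    simp only [smul_eq_mul, inv_inv] at this
    rw [show (fun y => phi (y / s)) = fun y => phi (s⁻¹ * y) by funext y; rw [inv_mul_eq_div]]
    rw [this, inv_mul_eq_div, ← mul_assoc]
    field_simp
  have heven : ∀ x, phi (-x) = phi x := by intro x; simp [phi, neg_sq]
  have h3 : (∫ u in Ioi ((c - μ) / s), phi u) = Phi ((μ - c) / s) := by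
    have h4 : (∫ u in Ioi ((c - μ) / s), phi u)
        = ∫ u in Ioi ((c - μ) / s), phi (-u) := by simp_rw [heven]
    rw [h4, integral_comp_neg_Ioi, integral_Iic_eq_integral_Iio]
    unfold Phi
    congr 1
    rw [← neg_div, neg_sub]
  rw [h1, h2, h3]

lemma combine1 (m σ z0 x t : ℝ) (hσ : 0 < σ) (ht : 0 < t) :
    Real.exp (-m * (z0 - x) / σ ^ 2 - m ^ 2 * t / (2 * σ ^ 2)) *
      phi ((z0 - x) / (σ * Real.sqrt t))
    = phi ((x - (z0 + m * t)) / (σ * Real.sqrt t)) := by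
  obtain ⟨u, hu, rfl⟩ : ∃ u : ℝ, 0 < u ∧ u ^ 2 = t :=
    ⟨Real.sqrt t, Real.sqrt_pos.mpr ht, Real.sq_sqrt ht.le⟩
  rw [Real.sqrt_sq hu.le]
  unfold phi
  rw [mul_left_comm, ← Real.exp_add]
  congr 2
  field_simp
  ring

lemma combine2 (m σ zc z0 x t : ℝ) (hσ : 0 < σ) (ht : 0 < t) :
    Real.exp (-m * (z0 - x) / σ ^ 2 - m ^ 2 * t / (2 * σ ^ 2)) *
      phi ((-z0 - x + 2 * zc) / (σ * Real.sqrt t))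
    = Real.exp (-2 * m * (z0 - zc) / σ ^ 2) *
        phi ((x - (2 * zc - z0 + m * t)) / (σ * Real.sqrt t)) := by
  obtain ⟨u, hu, rfl⟩ : ∃ u : ℝ, 0 < u ∧ u ^ 2 = t :=
    ⟨Real.sqrt t, Real.sqrt_pos.mpr ht, Real.sq_sqrt ht.le⟩
  rw [Real.sqrt_sq hu.le]
  unfold phi
  rw [mul_left_comm, ← Real.exp_add, mul_left_comm, ← Real.exp_add]
  congr 2
  field_simp
  ring

/-- The conditional density `f̃(t,x,z₀)` of `Z_t` given that the Brownian motion `Z` with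
drift `m` and volatility `σ`, started at `z₀ > z_c`, has stayed above `z_c` on `[0,t]`. -/
noncomputable def ftilde (m σ zc t x z0 : ℝ) : ℝ :=
  (1 / (σ * Real.sqrt t)) * Real.exp (-m * (z0 - x) / σ ^ 2 - m ^ 2 * t / (2 * σ ^ 2)) *
      (phi ((z0 - x) / (σ * Real.sqrt t)) - phi ((-z0 - x + 2 * zc) / (σ * Real.sqrt t))) /
    (Phi ((z0 - zc + m * t) / (σ * Real.sqrt t)) -
      Real.exp (-2 * m * (z0 - zc) / σ ^ 2) * Phi ((zc - z0 + m * t) / (σ * Real.sqrt t)))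

/-- Let `m ∈ ℝ`, `σ > 0`, `t > 0` and `z₀ > z_c`. Then the denominator of `f̃` is strictly
positive, `f̃(t,x,z₀) > 0` for every `x > z_c`, and `∫_{z_c}^∞ f̃(t,x,z₀) dx = 1`; that is,
`f̃(t,·,z₀)` is a probability density on `(z_c, ∞)`. -/
theorem stmt_11 (m σ zc t z0 : ℝ) (hσ : 0 < σ) (ht : 0 < t) (hz0 : zc < z0) :
    (0 < Phi ((z0 - zc + m * t) / (σ * Real.sqrt t)) -
        Real.exp (-2 * m * (z0 - zc) / σ ^ 2) * Phi ((zc - z0 + m * t) / (σ * Real.sqrt t))) ∧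
    (∀ x : ℝ, zc < x → 0 < ftilde m σ zc t x z0) ∧
    (∫ x in Set.Ioi zc, ftilde m σ zc t x z0) = 1 := by
  set s : ℝ := σ * Real.sqrt t with hs_def
  have hs : 0 < s := mul_pos hσ (Real.sqrt_pos.mpr ht)
  set K : ℝ := Real.exp (-2 * m * (z0 - zc) / σ ^ 2) with hK_def
  set D : ℝ := Phi ((z0 - zc + m * t) / s) - K * Phi ((zc - z0 + m * t) / s) with hD_def
  set num : ℝ → ℝ := fun x =>
    (1 / s) * Real.exp (-m * (z0 - x) / σ ^ 2 - m ^ 2 * t / (2 * σ ^ 2)) *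
      (phi ((z0 - x) / s) - phi ((-z0 - x + 2 * zc) / s)) with hnum_def
  -- pointwise positivity of the numerator
  have hnum_pos : ∀ x ∈ Ioi zc, 0 < num x := by
    intro x hx
    rw [mem_Ioi] at hx
    have hsq : ((z0 - x) / s) ^ 2 < ((-z0 - x + 2 * zc) / s) ^ 2 := by
      have hkey : ((-z0 - x + 2 * zc) / s) ^ 2 - ((z0 - x) / s) ^ 2
          = 4 * (z0 - zc) * (x - zc) / s ^ 2 := by field_simp; ring
      have hpos : 0 < 4 * (z0 - zc) * (x - zc) / s ^ 2 :=
        div_pos (by nlinarith) (by positivity)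
      linarith
    have := phi_lt hsq
    have h1 : 0 < phi ((z0 - x) / s) - phi ((-z0 - x + 2 * zc) / s) := by linarith
    exact mul_pos (mul_pos (by positivity) (Real.exp_pos _)) h1
  -- combined representation of the numerator
  have hcomb : ∀ x : ℝ, num x =
      (1 / s) * phi ((x - (z0 + m * t)) / s)
        - K * ((1 / s) * phi ((x - (2 * zc - z0 + m * t)) / s)) := by
    intro x
    have c1 := combine1 m σ z0 x t hσ ht
    have c2 := combine2 m σ zc z0 x t hσ ht
    rw [← hs_def] at c1 c2
    calc num x = (1 / s) *
          (Real.exp (-m * (z0 - x) / σ ^ 2 - m ^ 2 * t / (2 * σ ^ 2)) * phi ((z0 - x) / s))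
        - (1 / s) *
          (Real.exp (-m * (z0 - x) / σ ^ 2 - m ^ 2 * t / (2 * σ ^ 2)) *
            phi ((-z0 - x + 2 * zc) / s)) := by rw [hnum_def]; ring
      _ = _ := by rw [c1, c2]; ring
  have hint1 : Integrable (fun x => (1 / s) * phi ((x - (z0 + m * t)) / s)) :=
    integrable_gauss s (z0 + m * t) hs.ne'
  have hint2 : Integrable (fun x => (1 / s) * phi ((x - (2 * zc - z0 + m * t)) / s)) :=
    integrable_gauss s (2 * zc - z0 + m * t) hs.ne'
  have hnum_int : Integrable num := by
    have : num = fun x => (1 / s) * phi ((x - (z0 + m * t)) / s)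
        - K * ((1 / s) * phi ((x - (2 * zc - z0 + m * t)) / s)) := funext hcomb
    rw [this]
    exact hint1.sub (hint2.const_mul K)
  -- the integral of the numerator equals D
  have hIeq : (∫ x in Ioi zc, num x) = D := by
    simp_rw [hcomb]
    have e2 : (∫ a in Ioi zc, K * (1 / s * phi ((a - (2 * zc - z0 + m * t)) / s)))
        = K * Phi ((2 * zc - z0 + m * t - zc) / s) := by
      rw [integral_const_mul, integral_gauss_Ioi s (2 * zc - z0 + m * t) zc hs]
    rw [integral_sub hint1.integrableOn ((hint2.const_mul K).integrableOn),
      integral_gauss_Ioi s (z0 + m * t) zc hs, e2, hD_def]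
    congr 3 <;> ring
  -- D > 0
  have hD_pos : 0 < D := by
    rw [← hIeq]
    refine (setIntegral_pos_iff_support_of_nonneg_ae ?_ hnum_int.integrableOn).mpr ?_
    · exact (ae_restrict_iff' measurableSet_Ioi).mpr
        (Filter.Eventually.of_forall fun x hx => (hnum_pos x hx).le)
    · have hsub : Ioi zc ⊆ Function.support num ∩ Ioi zc :=
        fun x hx => ⟨(hnum_pos x hx).ne', hx⟩
      calc (0 : ENNReal) < volume (Ioi zc) := by simp [Real.volume_Ioi]
        _ ≤ volume (Function.support num ∩ Ioi zc) := measure_mono hsub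
  have hft : ∀ x : ℝ, ftilde m σ zc t x z0 = num x / D := fun x => rfl
  refine ⟨hD_pos, fun x hx => ?_, ?_⟩
  · rw [hft]
    exact div_pos (hnum_pos x hx) hD_pos
  · simp_rw [hft]
    rw [integral_div, hIeq, div_self hD_pos.ne']
end

section
/- Let (Ω, F, ℙ) be a probability space, r > 0, P > 0, c ∈ ℝ, R ∈ [0,1), and let t < t₁ < t₂ < ⋯ be a strictly increasing sequence of times with T := t_m for some m ≥ 1. Let τ : Ω → (t, ∞] be a measurable random time such that almost surely τ ∈ {t₁, t₂, …} ∪ {∞}. Then P·e^{−r(T−t)}·ℙ(τ > T) + cP·𝔼[∫_t^T e^{−r(u−t)}·1_{{τ > u}} du] + R·P·𝔼[e^{−r(τ−t)}·1_{{τ ≤ T}}] = (1−R)·P·e^{−r(T−t)}·ℙ(τ > t_m) + Σ_{i=1}^{m−1} ((cP/r) − RP)·(e^{−r(t_i−t)} − e^{−r(t_{i+1}−t)})·ℙ(τ > t_i) + (cP/r)·(1 − e^{−r(t₁−t)}) + R·P·e^{−r(t₁−t)}. -/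
/-!
Everything reduces to the discount factor at the stopped time `min τ T`, as a function of the
path: `D = exp (-r (min τ T - t))`. Pointwise, the coupon leg is `(1 - D) / r` and the recovery
leg is `D` minus the discounted survival payoff. Since `τ` lives on the report dates, `D`
telescopes along the grid into `exp (-r (t₁ - t))` minus the discount increments weighted by
the survival indicators `1{τ > tᵢ}`, so `𝔼 D` is a finite combination of survival
probabilities and the identity is linear algebra.
-/

open MeasureTheory Real Set

theorem Finset.sum_Ico_sub' {M : Type*} [AddCommGroup M] (g : ℕ → M) {m n : ℕ}
    (hmn : m ≤ n) :
    ∑ i ∈ Finset.Ico m n, (g i - g (i + 1)) = g m - g n := by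
  rw [← neg_sub (g n), ← Finset.sum_Ico_sub g hmn, ← Finset.sum_neg_distrib]
  simp only [neg_sub]

theorem integral_exp_neg_mul_sub {r : ℝ} (hr : r ≠ 0) (t a b : ℝ) :
    ∫ u in a..b, exp (-r * (u - t)) = (exp (-r * (a - t)) - exp (-r * (b - t))) / r := by
  have hshift : ∀ u, -r * (u - t) = -r * u + r * t := fun u => by ring
  simp only [hshift, intervalIntegral.integral_comp_mul_add (fun u => exp u) (neg_ne_zero.2 hr),
    integral_exp, smul_eq_mul]
  field_simp
  ring

theorem intervalIntegral_ite_coe_lt {f : ℝ → ℝ} {a b : ℝ} {x : EReal} (hab : a ≤ b)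
    (hax : (a : EReal) ≤ x) :
    ∫ u in a..b, (if (u : EReal) < x then f u else 0) = ∫ u in a..(min x b).toReal, f u := by
  set s := (min x b).toReal
  have hs : (s : EReal) = min x b :=
    EReal.coe_toReal ((min_le_right x b).trans_lt (EReal.coe_lt_top b)).ne
      ((EReal.bot_lt_coe a).trans_le (le_min hax (EReal.coe_le_coe_iff.2 hab))).ne'
  have has : a ≤ s := EReal.coe_le_coe_iff.1 (hs ▸ le_min hax (EReal.coe_le_coe_iff.2 hab))
  have hsb : s ≤ b := EReal.coe_le_coe_iff.1 (hs ▸ min_le_right x b)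
  rw [← intervalIntegral.integral_indicator ⟨has, hsb⟩]
  refine intervalIntegral.integral_congr_ae ?_
  -- off the null set `{s}`, `u < x` is the same as `u ≤ s`
  filter_upwards [(countable_singleton s).ae_notMem volume] with u hus hu
  have hub : u ≤ b := by rw [uIoc_of_le hab] at hu; exact hu.2
  have hlt : (u : EReal) < x ↔ u ≤ s := by
    constructor
    · intro hux
      exact EReal.coe_le_coe_iff.1 (hs ▸ le_min hux.le (EReal.coe_le_coe_iff.2 hub))
    · intro hus'
      exact (EReal.coe_lt_coe_iff.2 (hus'.lt_of_ne hus)).trans_le (hs ▸ min_le_left x b)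
  simp [indicator_apply, hlt]

theorem intervalIntegral_ite_coe_lt_exp {r t b : ℝ} {x : EReal} (hr : r ≠ 0) (htb : t ≤ b)
    (htx : (t : EReal) ≤ x) :
    ∫ u in t..b, (if (u : EReal) < x then exp (-r * (u - t)) else 0)
      = (1 - exp (-r * ((min x b).toReal - t))) / r := by
  rw [intervalIntegral_ite_coe_lt htb htx, integral_exp_neg_mul_sub hr, sub_self, mul_zero,
    exp_zero]

theorem ite_le_eq_sub (f : ℝ → ℝ) (x : EReal) (T : ℝ) :
    (if x ≤ T then f x.toReal else 0)
      = f (min x T).toReal - f T * (if (T : EReal) < x then 1 else 0) := by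
  by_cases hxT : x ≤ T
  · simp [hxT, not_lt.2 hxT]
  · simp [hxT, min_eq_right (not_le.1 hxT).le, not_le.1 hxT]

section Grid

variable {ts : ℕ → ℝ} {m : ℕ}

theorem exists_index_min_eq_of_grid (hts : StrictMonoOn ts (Ici 1)) (hm : 1 ≤ m) {x : EReal}
    (hx : (∃ k, 1 ≤ k ∧ x = ts k) ∨ x = ⊤) :
    ∃ k, 1 ≤ k ∧ k ≤ m ∧ min x (ts m) = ts k ∧
      ∀ i ∈ Finset.Ico 1 m, ((ts i : EReal) < x ↔ i < k) := by
  rcases hx with ⟨k, hk, rfl⟩ | rfl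
  · refine ⟨min k m, le_min hk hm, min_le_right k m, ?_, fun i hi => ?_⟩
    · rcases le_total k m with hkm | hmk
      · simp [hkm, hts.le_iff_le (mem_Ici.2 hk) (mem_Ici.2 hm)]
      · simp [hmk, hts.le_iff_le (mem_Ici.2 hm) (mem_Ici.2 hk)]
    · have hi' := Finset.mem_Ico.1 hi
      rw [EReal.coe_lt_coe_iff, hts.lt_iff_lt (mem_Ici.2 hi'.1) (mem_Ici.2 hk)]
      omega
  · exact ⟨m, hm, le_rfl, min_eq_right le_top, fun i hi => by simp [(Finset.mem_Ico.1 hi).2]⟩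

theorem sum_Ico_sub_mul_ite_lt (hts : StrictMonoOn ts (Ici 1)) (hm : 1 ≤ m) (f : ℝ → ℝ)
    {x : EReal} (hx : (∃ k, 1 ≤ k ∧ x = ts k) ∨ x = ⊤) :
    ∑ i ∈ Finset.Ico 1 m, (f (ts i) - f (ts (i + 1))) * (if (ts i : EReal) < x then 1 else 0)
      = f (ts 1) - f (min x (ts m)).toReal := by
  obtain ⟨k, hk, hkm, hmin, hlt⟩ := exists_index_min_eq_of_grid hts hm hx
  have hfilter : (Finset.Ico 1 m).filter (· < k) = Finset.Ico 1 k := by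
    ext i; simp only [Finset.mem_filter, Finset.mem_Ico]; omega
  rw [hmin, EReal.toReal_coe, ← Finset.sum_Ico_sub' (fun i => f (ts i)) hk, ← hfilter,
    Finset.sum_filter]
  refine Finset.sum_congr rfl fun i hi => ?_
  simp [hlt i hi]

end Grid

section Expectation

variable {Ω : Type*} [MeasurableSpace Ω] {μ : Measure Ω}

theorem integral_ite_one_zero {p : Ω → Prop} [DecidablePred p] (hp : MeasurableSet {ω | p ω}) :
    ∫ ω, (if p ω then (1 : ℝ) else 0) ∂μ = μ.real {ω | p ω} := by
  simpa [indicator_apply] using integral_indicator_one (μ := μ) hp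

theorem integrable_ite_one_zero [IsFiniteMeasure μ] {p : Ω → Prop} [DecidablePred p]
    (hp : MeasurableSet {ω | p ω}) : Integrable (fun ω => if p ω then (1 : ℝ) else 0) μ := by
  refine ((integrable_const (1 : ℝ)).indicator hp).congr (ae_of_all _ fun ω => ?_)
  simp [indicator_apply]

variable {τ : Ω → EReal} {ts : ℕ → ℝ} {m : ℕ}

theorem comp_min_ae_eq_of_grid (hts : StrictMonoOn ts (Ici 1)) (hm : 1 ≤ m)
    (hgrid : ∀ᵐ ω ∂μ, (∃ k, 1 ≤ k ∧ τ ω = ts k) ∨ τ ω = ⊤) (f : ℝ → ℝ) :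
    (fun ω => f (min (τ ω) (ts m)).toReal) =ᵐ[μ] fun ω =>
      f (ts 1) - ∑ i ∈ Finset.Ico 1 m,
        (f (ts i) - f (ts (i + 1))) * (if (ts i : EReal) < τ ω then 1 else 0) := by
  filter_upwards [hgrid] with ω hω
  rw [sum_Ico_sub_mul_ite_lt hts hm f hω, sub_sub_cancel]

theorem integrable_sum_mul_ite_lt [IsFiniteMeasure μ] (hτ : Measurable τ) (s : Finset ℕ)
    (a : ℕ → ℝ) :
    Integrable (fun ω => ∑ i ∈ s, a i * (if (ts i : EReal) < τ ω then 1 else 0)) μ :=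
  integrable_finsetSum _ fun _ _ =>
    (integrable_ite_one_zero (measurableSet_lt measurable_const hτ)).const_mul _

theorem integrable_comp_min_of_grid [IsFiniteMeasure μ] (hτ : Measurable τ)
    (hts : StrictMonoOn ts (Ici 1)) (hm : 1 ≤ m)
    (hgrid : ∀ᵐ ω ∂μ, (∃ k, 1 ≤ k ∧ τ ω = ts k) ∨ τ ω = ⊤) (f : ℝ → ℝ) :
    Integrable (fun ω => f (min (τ ω) (ts m)).toReal) μ :=
  ((integrable_const _).sub
    (integrable_sum_mul_ite_lt hτ _ fun i => f (ts i) - f (ts (i + 1)))).congr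
      (comp_min_ae_eq_of_grid hts hm hgrid f).symm

theorem integral_comp_min_of_grid [IsProbabilityMeasure μ] (hτ : Measurable τ)
    (hts : StrictMonoOn ts (Ici 1)) (hm : 1 ≤ m)
    (hgrid : ∀ᵐ ω ∂μ, (∃ k, 1 ≤ k ∧ τ ω = ts k) ∨ τ ω = ⊤) (f : ℝ → ℝ) :
    ∫ ω, f (min (τ ω) (ts m)).toReal ∂μ
      = f (ts 1) - ∑ i ∈ Finset.Ico 1 m,
          (f (ts i) - f (ts (i + 1))) * μ.real {ω | (ts i : EReal) < τ ω} := by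
  have hsurv (i : ℕ) : MeasurableSet {ω | (ts i : EReal) < τ ω} :=
    measurableSet_lt measurable_const hτ
  rw [integral_congr_ae (comp_min_ae_eq_of_grid hts hm hgrid f),
    integral_sub (integrable_const _)
      (integrable_sum_mul_ite_lt hτ _ fun i => f (ts i) - f (ts (i + 1))),
    integral_const, probReal_univ, one_smul,
    integral_finsetSum _ fun i _ => (integrable_ite_one_zero (hsurv i)).const_mul _]
  simp only [integral_const_mul, integral_ite_one_zero (hsurv _)]

theorem integral_intervalIntegral_ite_lt_exp [IsProbabilityMeasure μ] {r t b : ℝ} (hr : r ≠ 0)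
    (htb : t ≤ b) (htτ : ∀ᵐ ω ∂μ, (t : EReal) ≤ τ ω)
    (hint : Integrable (fun ω => exp (-r * ((min (τ ω) b).toReal - t))) μ) :
    ∫ ω, (∫ u in t..b, if (u : EReal) < τ ω then exp (-r * (u - t)) else 0) ∂μ
      = (1 - ∫ ω, exp (-r * ((min (τ ω) b).toReal - t)) ∂μ) / r := by
  rw [integral_congr_ae (htτ.mono fun ω => intervalIntegral_ite_coe_lt_exp hr htb), integral_div,
    integral_sub (integrable_const 1) hint, integral_const, probReal_univ, one_smul]

theorem integral_ite_le_toReal [IsFiniteMeasure μ] (hτ : Measurable τ) (f : ℝ → ℝ)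
    (T : ℝ) (hint : Integrable (fun ω => f (min (τ ω) T).toReal) μ) :
    ∫ ω, (if τ ω ≤ T then f (τ ω).toReal else 0) ∂μ
      = ∫ ω, f (min (τ ω) T).toReal ∂μ - f T * μ.real {ω | (T : EReal) < τ ω} := by
  have hsurv := measurableSet_lt (measurable_const (a := (T : EReal))) hτ
  simp only [ite_le_eq_sub f]
  rw [integral_sub hint ((integrable_ite_one_zero hsurv).const_mul _), integral_const_mul,
    integral_ite_one_zero hsurv]

end Expectation

theorem stmt_13_general {Ω : Type*} [MeasurableSpace Ω] (ℙ : Measure Ω) [IsProbabilityMeasure ℙ]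
    (r P c R : ℝ) (hr : 0 < r)
    (t : ℝ) (ts : ℕ → ℝ) (ht1 : t < ts 1) (hmono : ∀ i, 1 ≤ i → ts i < ts (i + 1))
    (m : ℕ) (hm : 1 ≤ m) (T : ℝ) (hT : T = ts m)
    (τ : Ω → EReal) (hτ : Measurable τ)
    (hgrid : ∀ᵐ ω ∂ℙ, (∃ i, 1 ≤ i ∧ τ ω = ((ts i : ℝ) : EReal)) ∨ τ ω = ⊤) :
    P * Real.exp (-r * (T - t)) * (ℙ {ω | (T : EReal) < τ ω}).toReal
        + c * P *
          (∫ ω, (∫ u in t..T, if (u : EReal) < τ ω then Real.exp (-r * (u - t)) else 0) ∂ℙ)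
        + R * P *
          (∫ ω, (if τ ω ≤ (T : EReal) then Real.exp (-r * ((τ ω).toReal - t)) else 0) ∂ℙ)
      = (1 - R) * P * Real.exp (-r * (T - t)) * (ℙ {ω | ((ts m : ℝ) : EReal) < τ ω}).toReal
        + (∑ i ∈ Finset.Ico 1 m,
            ((c * P / r) - R * P) * (Real.exp (-r * (ts i - t)) - Real.exp (-r * (ts (i + 1) - t)))
              * (ℙ {ω | ((ts i : ℝ) : EReal) < τ ω}).toReal)
        + (c * P / r) * (1 - Real.exp (-r * (ts 1 - t)))
        + R * P * Real.exp (-r * (ts 1 - t)) := by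
  subst hT
  have hts : StrictMonoOn ts (Ici 1) :=
    strictMonoOn_of_lt_succ ordConnected_Ici fun i _ hi _ => hmono i hi
  have ht_lt (k : ℕ) (hk : 1 ≤ k) : t < ts k :=
    ht1.trans_le (hts.monotoneOn (mem_Ici.2 le_rfl) (mem_Ici.2 hk) hk)
  have htτ : ∀ᵐ ω ∂ℙ, (t : EReal) ≤ τ ω := hgrid.mono fun ω hω => by
    rcases hω with ⟨k, hk, hτk⟩ | hτ_top
    · exact hτk ▸ EReal.coe_le_coe_iff.2 (ht_lt k hk).le
    · simp [hτ_top]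
  have hD_int := integrable_comp_min_of_grid hτ hts hm hgrid fun s => exp (-r * (s - t))
  simp only [← measureReal_def]
  rw [integral_intervalIntegral_ite_lt_exp hr.ne' (ht_lt m hm).le htτ hD_int,
    integral_ite_le_toReal hτ (fun s => exp (-r * (s - t))) _ hD_int]
  simp only [mul_assoc (c * P / r - R * P), ← Finset.mul_sum]
  linear_combination (R * P - c * P / r) *
    integral_comp_min_of_grid hτ hts hm hgrid fun s => exp (-r * (s - t))

/-- Theorem 3 of the paper (price of a principal write-down CoCo whose conversion time `τ`
can occur only at the accounting report dates `t₁ < t₂ < ⋯`, with maturity `T = t_m`):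
the discounted value of principal, coupons and recovery equals the stated closed form in
terms of the survival probabilities `ℙ(τ > t_i)`. The value `⊤ : EReal` of `τ` encodes
that conversion never occurs. -/
theorem stmt_13 {Ω : Type*} [MeasurableSpace Ω] (ℙ : Measure Ω) [IsProbabilityMeasure ℙ]
    (r P c R : ℝ) (hr : 0 < r) (hP : 0 < P) (hR0 : 0 ≤ R) (hR1 : R < 1)
    (t : ℝ) (ts : ℕ → ℝ) (ht1 : t < ts 1) (hmono : ∀ i, 1 ≤ i → ts i < ts (i + 1))
    (m : ℕ) (hm : 1 ≤ m) (T : ℝ) (hT : T = ts m)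
    (τ : Ω → EReal) (hτ : Measurable τ)
    (hgrid : ∀ᵐ ω ∂ℙ, (∃ i, 1 ≤ i ∧ τ ω = ((ts i : ℝ) : EReal)) ∨ τ ω = ⊤) :
    P * Real.exp (-r * (T - t)) * (ℙ {ω | (T : EReal) < τ ω}).toReal
        + c * P *
          (∫ ω, (∫ u in t..T, if (u : EReal) < τ ω then Real.exp (-r * (u - t)) else 0) ∂ℙ)
        + R * P *
          (∫ ω, (if τ ω ≤ (T : EReal) then Real.exp (-r * ((τ ω).toReal - t)) else 0) ∂ℙ)
      = (1 - R) * P * Real.exp (-r * (T - t)) * (ℙ {ω | ((ts m : ℝ) : EReal) < τ ω}).toReal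
        + (∑ i ∈ Finset.Ico 1 m,
            ((c * P / r) - R * P) * (Real.exp (-r * (ts i - t)) - Real.exp (-r * (ts (i + 1) - t)))
              * (ℙ {ω | ((ts i : ℝ) : EReal) < τ ω}).toReal)
        + (c * P / r) * (1 - Real.exp (-r * (ts 1 - t)))
        + R * P * Real.exp (-r * (ts 1 - t)) :=
  stmt_13_general ℙ r P c R hr t ts ht1 hmono m hm T hT τ hτ hgrid
end
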